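/- arXiv:0705.0291 — 4 statements merged into one kernel-verified Lean document; each statement's English description precedes it below -/
import Mathlib

section
/- With the interval recursion a^{(j+1)} = a^{(j)} + ((σ(j+1)-1)/2)(b^{(j)}-a^{(j)}), b^{(j+1)} = b^{(j)} + ((σ(j+1)+1)/2)(b^{(j)}-a^{(j)}), b^{(0)}-a^{(0)}=2: the sequence (a^{(j)}) is bounded below if and only if σ(j) = -1 for only finitely many j, and (b^{(j)}) is bounded above if and only if σ(j) = 1 for only finitely many j. -/
/-! The width `b j - a j` doubles at every step, so it equals `2 ^ (j + 1)`. Hence `a` drops by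
`2 ^ (j + 1)` when `σ (j + 1) = -1` and stays put otherwise, and `b` rises by `2 ^ (j + 1)` when
`σ (j + 1) = 1` and stays put otherwise. A monotone sequence whose jumps are at least `1` is bounded
iff it jumps finitely often: if it is bounded it converges, so its increments tend to `0`. -/

open Filter Topology

lemma Nat.finite_setOf_iff_eventually_not_succ {p : ℕ → Prop} :
    {j | p j}.Finite ↔ ∀ᶠ j in atTop, ¬ p (j + 1) := by
  have hshift : (∀ᶠ j in atTop, ¬ p (j + 1)) ↔ ∀ᶠ j in atTop, ¬ p j :=
    (eventually_map (P := fun j => ¬ p j)).symm.trans (by rw [map_add_atTop_eq_nat])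
  rw [hshift, ← Nat.cofinite_eq_atTop, eventually_cofinite]
  simp only [not_not]

lemma bddAbove_range_iff_finite_of_jumps {u : ℕ → ℝ} {p : ℕ → Prop} {ε : ℝ} (hε : 0 < ε)
    (hjump : ∀ j, p (j + 1) → ε ≤ u (j + 1) - u j) (hstay : ∀ j, ¬ p (j + 1) → u (j + 1) = u j) :
    BddAbove (Set.range u) ↔ {j | p j}.Finite := by
  rw [Nat.finite_setOf_iff_eventually_not_succ]
  constructor
  · intro hbdd
    have hmono : Monotone u := monotone_nat_of_le_succ fun j => by
      by_cases h : p (j + 1)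
      · linarith [hjump j h]
      · exact (hstay j h).ge
    have hincr : Tendsto (fun j => u (j + 1) - u j) atTop (𝓝 0) := by
      have hlim := tendsto_atTop_ciSup hmono hbdd
      simpa using (hlim.comp (tendsto_add_atTop_nat 1)).sub hlim
    filter_upwards [hincr.eventually (gt_mem_nhds hε)] with j hj hp
    linarith [hjump j hp]
  · intro hstop
    have hconst : EventuallyConst u atTop :=
      eventuallyConst_atTop_nat.2 (eventually_atTop.1 (hstop.mono hstay))
    obtain ⟨N, hN⟩ := eventuallyConst_atTop.1 hconst
    exact (tendsto_atTop_of_eventually_const hN).bddAbove_range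

lemma interval_width_eq (σ : ℕ → ℤ) (a b : ℕ → ℝ)
    (h0 : b 0 - a 0 = 2)
    (ha : ∀ j, a (j + 1) = a j + (((σ (j + 1) : ℝ) - 1) / 2) * (b j - a j))
    (hb : ∀ j, b (j + 1) = b j + (((σ (j + 1) : ℝ) + 1) / 2) * (b j - a j)) (j : ℕ) :
    b j - a j = 2 ^ (j + 1) := by
  induction j with
  | zero => simpa using h0
  | succ j ih => rw [ha, hb, pow_succ, ← ih]; ring

theorem interval_recursion_bounded_iff (σ : ℕ → ℤ) (a b : ℕ → ℝ)
    (hσ : ∀ j, σ j = -1 ∨ σ j = 1)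
    (h0 : b 0 - a 0 = 2)
    (ha : ∀ j, a (j + 1) = a j + (((σ (j + 1) : ℝ) - 1) / 2) * (b j - a j))
    (hb : ∀ j, b (j + 1) = b j + (((σ (j + 1) : ℝ) + 1) / 2) * (b j - a j)) :
    (BddBelow (Set.range a) ↔ {j : ℕ | σ j = -1}.Finite) ∧
    (BddAbove (Set.range b) ↔ {j : ℕ | σ j = 1}.Finite) := by
  have hwidth := interval_width_eq σ a b h0 ha hb
  have hone : ∀ j : ℕ, (1 : ℝ) ≤ 2 ^ (j + 1) := fun j => one_le_pow₀ one_le_two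
  constructor
  · rw [← bddAbove_neg, ← Set.image_neg_eq_neg, ← Set.range_comp]
    refine bddAbove_range_iff_finite_of_jumps one_pos (fun j hj => ?_) (fun j hj => ?_)
    · simp only [Function.comp_apply, ha, hwidth, hj]
      push_cast
      linarith [hone j]
    · simp only [Function.comp_apply, ha, hwidth, (hσ (j + 1)).resolve_left hj]
      push_cast
      ring
  · refine bddAbove_range_iff_finite_of_jumps one_pos (fun j hj => ?_) (fun j hj => ?_)
    · rw [hb, hwidth, hj]
      push_cast
      linarith [hone j]
    · rw [hb, hwidth, (hσ (j + 1)).resolve_right hj]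
      push_cast
      ring
end

section
/- With the interval recursion as above, the union ⋃_j [a^{(j)}, b^{(j)}] is one of the following: all of ℝ, a half-line [a, ∞), a half-line (-∞, b], and it is never a bounded set. -/
/-!
Each step doubles `[a j, b j]` by extending it to the left (`σ = -1`) or to the right (`σ = 1`),
so `a` is antitone, `b` is monotone and `b j - a j = 2 ^ (j + 1)`; in particular the union is
unbounded. An endpoint that moves at all moves by at least `1`, while a bounded monotone sequence
is Cauchy: so `a` is bounded below exactly when it is eventually constant, and then the union is
the half-line `[lim a, ∞)`; symmetrically for `b`. If neither endpoint is bounded, the union is `ℝ`.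
-/

open Filter Set Bornology

lemma CauchySeq.eventuallyConst_of_eq_or_le_dist {α : Type*} [PseudoMetricSpace α] {u : ℕ → α}
    {δ : ℝ} (hu : CauchySeq u) (hδ : 0 < δ)
    (hstep : ∀ j, u (j + 1) = u j ∨ δ ≤ dist (u (j + 1)) (u j)) :
    EventuallyConst u atTop := by
  obtain ⟨N, hN⟩ := Metric.cauchySeq_iff.1 hu δ hδ
  refine eventuallyConst_atTop_nat.2 ⟨N, fun j hj => (hstep j).resolve_right ?_⟩
  exact (hN _ (by omega) _ hj).not_ge

lemma iUnion_Icc_eq_univ {α : Type*} [LinearOrder α] {a b : ℕ → α} (ha : Antitone a)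
    (hb : Monotone b) (ha' : ¬BddBelow (range a)) (hb' : ¬BddAbove (range b)) :
    ⋃ j, Icc (a j) (b j) = univ := by
  refine eq_univ_of_forall fun x => ?_
  obtain ⟨_, ⟨i, rfl⟩, hi⟩ := not_bddBelow_iff.1 ha' x
  obtain ⟨_, ⟨k, rfl⟩, hk⟩ := not_bddAbove_iff.1 hb' x
  exact mem_iUnion.2 ⟨max i k, (ha (le_max_left i k)).trans hi.le,
    hk.le.trans (hb (le_max_right i k))⟩

section

variable {a b : ℕ → ℝ}

lemma exists_iUnion_Icc_eq_Ici (ha : Antitone a) (hconst : EventuallyConst a atTop)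
    (hlen : Tendsto (fun j => b j - a j) atTop atTop) :
    ∃ c, ⋃ j, Icc (a j) (b j) = Ici c := by
  obtain ⟨c, hc⟩ := hconst.eventuallyEq_const
  refine ⟨c, Subset.antisymm (iUnion_subset fun j x hx => ?_) fun x hx => ?_⟩
  · obtain ⟨k, hk, hjk⟩ := (hc.and (eventually_ge_atTop j)).exists
    exact (hk.symm.trans_le (ha hjk)).trans hx.1
  · obtain ⟨k, hk, hbk⟩ := (hc.and (tendsto_atTop.1 hlen (x - c))).exists
    have hk : a k = c := hk
    exact mem_iUnion.2 ⟨k, by rw [hk]; exact hx, by linarith⟩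

lemma exists_iUnion_Icc_eq_Iic (hb : Monotone b) (hconst : EventuallyConst b atTop)
    (hlen : Tendsto (fun j => b j - a j) atTop atTop) :
    ∃ c, ⋃ j, Icc (a j) (b j) = Iic c := by
  obtain ⟨c, hc⟩ := hconst.eventuallyEq_const
  refine ⟨c, Subset.antisymm (iUnion_subset fun j x hx => ?_) fun x hx => ?_⟩
  · obtain ⟨k, hk, hjk⟩ := (hc.and (eventually_ge_atTop j)).exists
    exact hx.2.trans ((hb hjk).trans_eq hk)
  · obtain ⟨k, hk, hak⟩ := (hc.and (tendsto_atTop.1 hlen (c - x))).exists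
    have hk : b k = c := hk
    exact mem_iUnion.2 ⟨k, by linarith, by rw [hk]; exact hx⟩

lemma not_isBounded_iUnion_Icc (hlen : Tendsto (fun j => b j - a j) atTop atTop) :
    ¬IsBounded (⋃ j, Icc (a j) (b j)) := by
  intro hbdd
  obtain ⟨C, hC⟩ := Metric.isBounded_iff.1 hbdd
  obtain ⟨j, hj₀, hjC⟩ := ((tendsto_atTop.1 hlen 0).and (tendsto_atTop.1 hlen (C + 1))).exists
  have hab : a j ≤ b j := by linarith
  have hdist := hC (mem_iUnion_of_mem j (right_mem_Icc.2 hab))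
    (mem_iUnion_of_mem j (left_mem_Icc.2 hab))
  rw [Real.dist_eq, abs_of_nonneg hj₀] at hdist
  linarith

def ExtendsByDoubling (a b : ℕ → ℝ) : Prop :=
  ∀ j, (a (j + 1) = a j - 2 ^ (j + 1) ∧ b (j + 1) = b j) ∨
    (a (j + 1) = a j ∧ b (j + 1) = b j + 2 ^ (j + 1))

lemma sub_eq_two_pow_of_recursion {σ : ℕ → ℤ} (h0 : b 0 - a 0 = 2)
    (ha : ∀ j, a (j + 1) = a j + (((σ (j + 1) : ℝ) - 1) / 2) * (b j - a j))
    (hb : ∀ j, b (j + 1) = b j + (((σ (j + 1) : ℝ) + 1) / 2) * (b j - a j)) (j : ℕ) :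
    b j - a j = 2 ^ (j + 1) := by
  induction j with
  | zero => simpa using h0
  | succ j ih => rw [hb j, ha j, pow_succ, ← ih]; ring

lemma extendsByDoubling_of_recursion {σ : ℕ → ℤ} (hσ : ∀ j, σ j = -1 ∨ σ j = 1)
    (h0 : b 0 - a 0 = 2)
    (ha : ∀ j, a (j + 1) = a j + (((σ (j + 1) : ℝ) - 1) / 2) * (b j - a j))
    (hb : ∀ j, b (j + 1) = b j + (((σ (j + 1) : ℝ) + 1) / 2) * (b j - a j)) :
    ExtendsByDoubling a b := by
  intro j
  rw [ha j, hb j, sub_eq_two_pow_of_recursion h0 ha hb j]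
  rcases hσ (j + 1) with h | h
  · left; rw [h]; constructor <;> push_cast <;> ring
  · right; rw [h]; constructor <;> push_cast <;> ring

lemma ExtendsByDoubling.antitone_left (hstep : ExtendsByDoubling a b) : Antitone a := by
  refine antitone_nat_of_succ_le fun j => ?_
  rcases hstep j with ⟨h, -⟩ | ⟨h, -⟩
  · rw [h]; exact sub_le_self _ (by positivity)
  · exact h.le

lemma ExtendsByDoubling.monotone_right (hstep : ExtendsByDoubling a b) : Monotone b := by
  refine monotone_nat_of_le_succ fun j => ?_
  rcases hstep j with ⟨-, h⟩ | ⟨-, h⟩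
  · exact h.ge
  · rw [h]; exact le_add_of_nonneg_right (by positivity)

lemma ExtendsByDoubling.left_eq_or_one_le_dist (hstep : ExtendsByDoubling a b) (j : ℕ) :
    a (j + 1) = a j ∨ 1 ≤ dist (a (j + 1)) (a j) := by
  rcases hstep j with ⟨h, -⟩ | ⟨h, -⟩
  · right; rw [h, Real.dist_eq, sub_sub_cancel_left, abs_neg, abs_of_pos (by positivity)]
    exact one_le_pow₀ one_le_two
  · exact Or.inl h

lemma ExtendsByDoubling.right_eq_or_one_le_dist (hstep : ExtendsByDoubling a b) (j : ℕ) :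
    b (j + 1) = b j ∨ 1 ≤ dist (b (j + 1)) (b j) := by
  rcases hstep j with ⟨-, h⟩ | ⟨-, h⟩
  · exact Or.inl h
  · right; rw [h, Real.dist_eq, add_sub_cancel_left, abs_of_pos (by positivity)]
    exact one_le_pow₀ one_le_two

end

theorem interval_recursion_union (σ : ℕ → ℤ) (a b : ℕ → ℝ)
    (hσ : ∀ j, σ j = -1 ∨ σ j = 1)
    (h0 : b 0 - a 0 = 2)
    (ha : ∀ j, a (j + 1) = a j + (((σ (j + 1) : ℝ) - 1) / 2) * (b j - a j))
    (hb : ∀ j, b (j + 1) = b j + (((σ (j + 1) : ℝ) + 1) / 2) * (b j - a j)) :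
    ((⋃ j, Set.Icc (a j) (b j)) = Set.univ ∨
     (∃ x : ℝ, (⋃ j, Set.Icc (a j) (b j)) = Set.Ici x) ∨
     (∃ x : ℝ, (⋃ j, Set.Icc (a j) (b j)) = Set.Iic x)) ∧
    ¬ Bornology.IsBounded (⋃ j, Set.Icc (a j) (b j)) := by
  have hstep := extendsByDoubling_of_recursion hσ h0 ha hb
  have hA := hstep.antitone_left
  have hB := hstep.monotone_right
  have hlen : Tendsto (fun j => b j - a j) atTop atTop := by
    simp only [sub_eq_two_pow_of_recursion h0 ha hb]
    exact (tendsto_pow_atTop_atTop_of_one_lt one_lt_two).comp (tendsto_add_atTop_nat 1)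
  refine ⟨?_, not_isBounded_iUnion_Icc hlen⟩
  by_cases hbelow : BddBelow (range a)
  · have hconst := (tendsto_atTop_ciInf hA hbelow).cauchySeq.eventuallyConst_of_eq_or_le_dist
      one_pos hstep.left_eq_or_one_le_dist
    exact Or.inr (Or.inl (exists_iUnion_Icc_eq_Ici hA hconst hlen))
  by_cases habove : BddAbove (range b)
  · have hconst := (tendsto_atTop_ciSup hB habove).cauchySeq.eventuallyConst_of_eq_or_le_dist
      one_pos hstep.right_eq_or_one_le_dist
    exact Or.inr (Or.inr (exists_iUnion_Icc_eq_Iic hB hconst hlen))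
  exact Or.inl (iUnion_Icc_eq_univ hA hB hbelow habove)
end

section
/- In dimension d, the pool structure of a Böröczky tiling is determined coordinatewise: given σ : ℕ → {-1,1}^d, let k be the number of coordinates i ∈ {1,…,d} in which σ_i is eventually constant. Then the union of the d-dimensional boxes defined by applying the interval recursion in each coordinate is congruent (up to translation and reflection of coordinates) to ℝ^{d-k} × [0,∞)^k, and the number of 'pools' obtained by reflecting in the k bounding hyperplanes is 2^k. -/
/-!
In each coordinate the intervals `[a j, b j]` are nested and double in length at every step:
a step with sign `1` keeps the left endpoint and a step with sign `-1` keeps the right one.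
Hence their union is the half-line `[a N, ∞)` or `(-∞, b N]` when the signs are constant from
`N` on, and all of `ℝ` otherwise. The boxes are nested too, so their union is the product of
these coordinate unions: an orthant bounded by the `k` hyperplanes of the eventually constant
coordinates. Reflecting it in some of these hyperplanes flips the signs of the corresponding
defining inequalities, and distinct sign patterns give distinct orthants, whence `2 ^ k` pools.
-/

open Set Filter

theorem iUnion_Icc_of_antitone_of_monotone {ι α : Type*} [Preorder ι] [IsDirectedOrder ι]
    [Preorder α] {a b : ι → α} (ha : Antitone a) (hb : Monotone b) :
    ⋃ j, Icc (a j) (b j) = (⋃ j, Ici (a j)) ∩ ⋃ j, Iic (b j) := by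
  simp only [← Ici_inter_Iic]
  exact iUnion_inter_of_monotone ha.Ici hb.Iic

structure IntervalRecursion (σ : ℕ → ℤ) (a b : ℕ → ℝ) : Prop where
  sign_eq : ∀ j, σ j = -1 ∨ σ j = 1
  length_pos_zero : 0 < b 0 - a 0
  left_succ : ∀ j, a (j + 1) = a j + (((σ (j + 1) : ℝ) - 1) / 2) * (b j - a j)
  right_succ : ∀ j, b (j + 1) = b j + (((σ (j + 1) : ℝ) + 1) / 2) * (b j - a j)

namespace IntervalRecursion

variable {σ : ℕ → ℤ} {a b : ℕ → ℝ}

/-- Through this mirror symmetry every statement about right endpoints yields one about left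
endpoints. -/
theorem neg (h : IntervalRecursion σ a b) : IntervalRecursion (-σ) (-b) (-a) where
  sign_eq j := by rcases h.sign_eq j with hs | hs <;> simp [hs]
  length_pos_zero := by simpa [add_comm, sub_eq_add_neg] using h.length_pos_zero
  left_succ j := by simp only [Pi.neg_apply, Int.cast_neg, h.right_succ]; ring
  right_succ j := by simp only [Pi.neg_apply, Int.cast_neg, h.left_succ]; ring

theorem length_eq (h : IntervalRecursion σ a b) (j : ℕ) :
    b j - a j = 2 ^ j * (b 0 - a 0) := by
  induction j with
  | zero => simp
  | succ j ih => rw [h.left_succ, h.right_succ, pow_succ]; linear_combination 2 * ih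

theorem length_zero_le (h : IntervalRecursion σ a b) (j : ℕ) : b 0 - a 0 ≤ b j - a j := by
  rw [h.length_eq j]
  exact le_mul_of_one_le_left h.length_pos_zero.le (one_le_pow₀ one_le_two)

theorem length_pos (h : IntervalRecursion σ a b) (j : ℕ) : 0 < b j - a j :=
  h.length_pos_zero.trans_le (h.length_zero_le j)

theorem monotone_right (h : IntervalRecursion σ a b) : Monotone b := by
  refine monotone_nat_of_le_succ fun j => ?_
  have hσ : (0 : ℝ) ≤ σ (j + 1) + 1 := by rcases h.sign_eq (j + 1) with hs | hs <;> simp [hs]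
  rw [h.right_succ]
  exact le_add_of_nonneg_right (mul_nonneg (by positivity) (h.length_pos j).le)

theorem antitone_left (h : IntervalRecursion σ a b) : Antitone a :=
  fun _ _ hij => neg_le_neg_iff.mp (h.neg.monotone_right hij)

theorem right_eq_of_forall_sign_eq_neg_one (h : IntervalRecursion σ a b) {N : ℕ}
    (hN : ∀ j ≥ N, σ j = -1) {j : ℕ} (hj : N ≤ j) : b j = b N := by
  induction j, hj using Nat.le_induction with
  | base => rfl
  | succ j hj ih => rw [h.right_succ, hN (j + 1) (by omega), ih]; push_cast; ring

theorem left_eq_of_forall_sign_eq_one (h : IntervalRecursion σ a b) {N : ℕ}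
    (hN : ∀ j ≥ N, σ j = 1) {j : ℕ} (hj : N ≤ j) : a j = a N :=
  neg_inj.mp (h.neg.right_eq_of_forall_sign_eq_neg_one (by simpa using hN) hj)

/-- Each step with sign `1` pushes the right endpoint out by the current length, which is at
least the initial length. -/
theorem exists_le_right (h : IntervalRecursion σ a b) (hσ : ∃ᶠ j in atTop, σ j = 1) (x : ℝ) :
    ∃ j, x ≤ b j := by
  have hstep : ∀ n : ℕ, ∃ j, b 0 + n * (b 0 - a 0) ≤ b j := by
    intro n
    induction n with
    | zero => exact ⟨0, by simp⟩
    | succ n ih =>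
      obtain ⟨j, hj⟩ := ih
      obtain ⟨m, hm, hσm⟩ := frequently_atTop.mp hσ (j + 1)
      obtain ⟨m, rfl⟩ := Nat.exists_eq_add_of_le' (hm.trans' (Nat.le_add_left 1 j))
      refine ⟨m + 1, ?_⟩
      rw [h.right_succ, hσm]
      have := h.monotone_right (show j ≤ m by omega)
      have := h.length_zero_le m
      push_cast
      linarith
  obtain ⟨n, hn⟩ := exists_nat_ge ((x - b 0) / (b 0 - a 0))
  obtain ⟨j, hj⟩ := hstep n
  refine ⟨j, le_trans ?_ hj⟩
  rw [div_le_iff₀ h.length_pos_zero] at hn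
  linarith

theorem exists_left_le (h : IntervalRecursion σ a b) (hσ : ∃ᶠ j in atTop, σ j = -1) (x : ℝ) :
    ∃ j, a j ≤ x := by
  obtain ⟨j, hj⟩ := h.neg.exists_le_right (hσ.mono fun j hj => by simp [hj]) (-x)
  exact ⟨j, neg_le_neg_iff.mp hj⟩

theorem iUnion_Icc_of_forall_sign_eq_one (h : IntervalRecursion σ a b) {N : ℕ}
    (hN : ∀ j ≥ N, σ j = 1) : ⋃ j, Icc (a j) (b j) = Ici (a N) := by
  have hright : ⋃ j, Iic (b j) = univ :=
    eq_univ_of_forall fun x => mem_iUnion.mpr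
      (h.exists_le_right (eventually_atTop.mpr ⟨N, hN⟩).frequently x)
  have hleft : ⋃ j, Ici (a j) = Ici (a N) := by
    refine (iUnion_subset fun j => Ici_subset_Ici.mpr ?_).antisymm
      (subset_iUnion (fun j => Ici (a j)) N)
    rcases le_total j N with hj | hj
    · exact h.antitone_left hj
    · exact (h.left_eq_of_forall_sign_eq_one hN hj).ge
  rw [iUnion_Icc_of_antitone_of_monotone h.antitone_left h.monotone_right, hleft, hright,
    inter_univ]

theorem iUnion_Icc_of_forall_sign_eq_neg_one (h : IntervalRecursion σ a b) {N : ℕ}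
    (hN : ∀ j ≥ N, σ j = -1) : ⋃ j, Icc (a j) (b j) = Iic (b N) := by
  ext x
  have := Set.ext_iff.mp
    (h.neg.iUnion_Icc_of_forall_sign_eq_one (N := N) fun j hj => by simp [hN j hj]) (-x)
  simpa [and_comm] using this

theorem iUnion_Icc_of_eventually_const (h : IntervalRecursion σ a b) {N : ℕ}
    (hN : ∀ j ≥ N, σ j = σ N) :
    ∃ c : ℝ, ⋃ j, Icc (a j) (b j) = {x | 0 ≤ (σ N : ℝ) * (x - c)} := by
  rcases h.sign_eq N with hs | hs
  · refine ⟨b N, ?_⟩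
    rw [h.iUnion_Icc_of_forall_sign_eq_neg_one fun j hj => (hN j hj).trans hs, hs]
    ext x
    simp
  · refine ⟨a N, ?_⟩
    rw [h.iUnion_Icc_of_forall_sign_eq_one fun j hj => (hN j hj).trans hs, hs]
    ext x
    simp

theorem frequently_sign_eq (h : IntervalRecursion σ a b) (hσ : ¬∃ N, ∀ j ≥ N, σ j = σ N)
    {s : ℤ} (hs : s = -1 ∨ s = 1) : ∃ᶠ j in atTop, σ j = s := by
  refine frequently_atTop.mpr fun M => ?_
  by_cases hM : σ M = s
  · exact ⟨M, le_rfl, hM⟩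
  push Not at hσ
  obtain ⟨j, hj, hne⟩ := hσ M
  exact ⟨j, hj, by rcases h.sign_eq j with _ | _ <;> rcases h.sign_eq M with _ | _ <;> omega⟩

theorem iUnion_Icc_of_not_eventually_const (h : IntervalRecursion σ a b)
    (hσ : ¬∃ N, ∀ j ≥ N, σ j = σ N) : ⋃ j, Icc (a j) (b j) = univ := by
  refine eq_univ_of_forall fun x => ?_
  rw [iUnion_Icc_of_antitone_of_monotone h.antitone_left h.monotone_right]
  exact ⟨mem_iUnion.mpr (h.exists_left_le (h.frequently_sign_eq hσ (.inl rfl)) x),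
    mem_iUnion.mpr (h.exists_le_right (h.frequently_sign_eq hσ (.inr rfl)) x)⟩

end IntervalRecursion

section Reflections

variable {ι : Type*}

def signedOrthant (S : Finset ι) (c : ι → ℝ) (η : ι → ℤ) : Set (ι → ℝ) :=
  {x | ∀ i ∈ S, 0 ≤ (η i : ℝ) * (x i - c i)}

def reflectAt (c : ι → ℝ) (ε : ι → ℤ) (x : ι → ℝ) : ι → ℝ :=
  fun i => c i + (ε i : ℝ) * (x i - c i)

def signVectors (S : Finset ι) : Set (ι → ℤ) :=
  {ε | (∀ i, ε i = -1 ∨ ε i = 1) ∧ ∀ i ∉ S, ε i = 1}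

theorem reflectAt_involutive {c : ι → ℝ} {ε : ι → ℤ} (hε : ∀ i, ε i = -1 ∨ ε i = 1) :
    Function.Involutive (reflectAt c ε) := by
  intro x
  funext i
  rcases hε i with hs | hs <;> simp [reflectAt, hs]

theorem reflectAt_image_signedOrthant {S : Finset ι} {c : ι → ℝ} {ε η : ι → ℤ}
    (hε : ∀ i, ε i = -1 ∨ ε i = 1) :
    reflectAt c ε '' signedOrthant S c η = signedOrthant S c (ε * η) := by
  rw [(reflectAt_involutive hε).image_eq_preimage_symm]
  ext x
  refine forall₂_congr fun i _ => ?_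
  simp only [reflectAt, Pi.mul_apply, Int.cast_mul]
  ring_nf

theorem eq_of_signedOrthant_eq {S : Finset ι} {c : ι → ℝ} {η η' : ι → ℤ}
    (hη : ∀ i, η i = -1 ∨ η i = 1) (hη' : ∀ i, η' i = -1 ∨ η' i = 1)
    (h : signedOrthant S c η = signedOrthant S c η') {i : ι} (hi : i ∈ S) : η i = η' i := by
  have hmem : (fun i => c i + η i) ∈ signedOrthant S c η' :=
    h ▸ fun i _ => by simpa using mul_self_nonneg (η i : ℝ)
  have := hmem i hi
  rcases hη i with hs | hs <;> rcases hη' i with hs' | hs' <;> simp [hs, hs'] at this ⊢ <;>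
    norm_num at this

theorem ncard_signVectors [Fintype ι] (S : Finset ι) :
    (signVectors S).ncard = 2 ^ S.card := by
  classical
  have : signVectors S =
      ↑(Fintype.piFinset fun i => if i ∈ S then ({-1, 1} : Finset ℤ) else {1}) := by
    ext ε
    simp only [signVectors, mem_ofPred_eq, Finset.mem_coe, Fintype.mem_piFinset, ← forall_and]
    refine forall_congr' fun i => ?_
    by_cases hi : i ∈ S <;> simp +contextual [hi]
  rw [this, ncard_coe_finset, Fintype.card_piFinset]
  simp [apply_ite Finset.card, Finset.prod_ite_mem]

theorem ncard_reflectAt_image_signedOrthant [Fintype ι] {S : Finset ι}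
    {c : ι → ℝ} {η : ι → ℤ} (hη : ∀ i, η i = -1 ∨ η i = 1) :
    {V : Set (ι → ℝ) | ∃ ε : ι → ℤ, (∀ i, ε i = -1 ∨ ε i = 1) ∧ (∀ i ∉ S, ε i = 1) ∧
      V = reflectAt c ε '' signedOrthant S c η}.ncard = 2 ^ S.card := by
  have hsign : ∀ {ε : ι → ℤ}, (∀ i, ε i = -1 ∨ ε i = 1) →
      ∀ i, (ε * η) i = -1 ∨ (ε * η) i = 1 := by
    intro ε hε i
    rcases hε i with hs | hs <;> rcases hη i with hs' | hs' <;> simp [hs, hs']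
  have himage : {V : Set (ι → ℝ) | ∃ ε : ι → ℤ, (∀ i, ε i = -1 ∨ ε i = 1) ∧
      (∀ i ∉ S, ε i = 1) ∧ V = reflectAt c ε '' signedOrthant S c η} =
      (fun ε => signedOrthant S c (ε * η)) '' signVectors S := by
    ext V
    refine exists_congr fun ε =>
      ⟨fun ⟨hε, hεS, hV⟩ => ⟨⟨hε, hεS⟩, ?_⟩, fun ⟨⟨hε, hεS⟩, hV⟩ => ⟨hε, hεS, ?_⟩⟩
    · rw [hV, reflectAt_image_signedOrthant hε]
    · rw [← hV, reflectAt_image_signedOrthant hε]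
  have hinj : InjOn (fun ε => signedOrthant S c (ε * η)) (signVectors S) := by
    rintro ε ⟨hε, hεS⟩ ε' ⟨hε', hε'S⟩ h
    funext i
    by_cases hi : i ∈ S
    · have := eq_of_signedOrthant_eq (hsign hε) (hsign hε') h hi
      rcases hη i with hs | hs <;> simpa [hs] using this
    · rw [hεS i hi, hε'S i hi]
  rw [himage, hinj.ncard_image, ncard_signVectors]

end Reflections

theorem iUnion_boxes_eq_signedOrthant {ι : Type*} [Finite ι] {σ : ℕ → ι → ℤ}
    {a b : ℕ → ι → ℝ} (h : ∀ i, IntervalRecursion (σ · i) (a · i) (b · i)) {S : Finset ι}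
    (hS : ∀ i, i ∈ S ↔ ∃ N, ∀ j ≥ N, σ j i = σ N i) :
    ∃ (N : ι → ℕ) (c : ι → ℝ), ⋃ j, {x : ι → ℝ | ∀ i, x i ∈ Icc (a j i) (b j i)} =
      signedOrthant S c fun i => σ (N i) i := by
  classical
  have hcoord : ∀ i, ∃ (N : ℕ) (c : ℝ), ⋃ j, Icc (a j i) (b j i) =
      if i ∈ S then {x | 0 ≤ (σ N i : ℝ) * (x - c)} else univ := by
    intro i
    by_cases hi : ∃ N, ∀ j ≥ N, σ j i = σ N i
    · obtain ⟨N, hN⟩ := hi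
      obtain ⟨c, hc⟩ := (h i).iUnion_Icc_of_eventually_const hN
      exact ⟨N, c, by rw [if_pos ((hS i).mpr ⟨N, hN⟩), hc]⟩
    · exact ⟨0, 0, by rw [if_neg (mt (hS i).mp hi), (h i).iUnion_Icc_of_not_eventually_const hi]⟩
  choose N c hc using hcoord
  refine ⟨N, c, ?_⟩
  have hmono i := (h i).antitone_left.Icc (h i).monotone_right
  calc ⋃ j, {x : ι → ℝ | ∀ i, x i ∈ Icc (a j i) (b j i)}
      _ = pi univ fun i => ⋃ j, Icc (a j i) (b j i) := by
        rw [← iUnion_univ_pi_of_monotone hmono]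
        simp [Set.pi]
      _ = signedOrthant S c fun i => σ (N i) i := by
        ext x
        simp only [mem_univ_pi, hc, signedOrthant]
        refine forall_congr' fun i => ?_
        split_ifs with hi <;> simp [hi]

/-- The pool structure of a `d`-dimensional Böröczky tiling, determined coordinatewise:
if exactly `k` coordinate sequences of `σ` are eventually constant, then the union of the
boxes produced by the coordinatewise interval recursion is (up to translation and
coordinate reflections) `ℝ^{d-k} × [0,∞)^k`, i.e. it is cut out by `k` coordinate
half-space conditions, and reflecting in the `k` bounding hyperplanes produces exactly
`2^k` pools. -/
theorem pool_structure (d k : ℕ) (σ : ℕ → Fin d → ℤ) (a b : ℕ → Fin d → ℝ)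
    (hσ : ∀ j i, σ j i = -1 ∨ σ j i = 1)
    (h0 : ∀ i, b 0 i - a 0 i = 2)
    (ha : ∀ j i, a (j + 1) i = a j i + (((σ (j + 1) i : ℝ) - 1) / 2) * (b j i - a j i))
    (hb : ∀ j i, b (j + 1) i = b j i + (((σ (j + 1) i : ℝ) + 1) / 2) * (b j i - a j i))
    (hk : {i : Fin d | ∃ N, ∀ j ≥ N, σ j i = σ N i}.ncard = k)
    (U : Set (Fin d → ℝ))
    (hU : U = ⋃ j, {x : Fin d → ℝ | ∀ i, x i ∈ Set.Icc (a j i) (b j i)}) :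
    ∃ (S : Finset (Fin d)) (c : Fin d → ℝ) (η : Fin d → ℤ),
      S.card = k ∧ (∀ i, η i = -1 ∨ η i = 1) ∧
      U = {x : Fin d → ℝ | ∀ i ∈ S, 0 ≤ (η i : ℝ) * (x i - c i)} ∧
      {V : Set (Fin d → ℝ) | ∃ ε : Fin d → ℤ, (∀ i, ε i = -1 ∨ ε i = 1) ∧
        (∀ i ∉ S, ε i = 1) ∧
        V = (fun x : Fin d → ℝ => fun i => c i + (ε i : ℝ) * (x i - c i)) '' U}.ncard
        = 2 ^ k := by
  classical
  have hrec i : IntervalRecursion (σ · i) (a · i) (b · i) :=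
    ⟨fun j => hσ j i, by linarith [h0 i], fun j => ha j i, fun j => hb j i⟩
  obtain ⟨N, c, hboxes⟩ := iUnion_boxes_eq_signedOrthant hrec fun _ => mem_toFinset
  have hS : {i : Fin d | ∃ N, ∀ j ≥ N, σ j i = σ N i}.toFinset.card = k := by
    rw [← hk, ncard_eq_toFinset_card']
  refine ⟨_, c, fun i => σ (N i) i, hS, fun i => hσ (N i) i, hU.trans hboxes, ?_⟩
  rw [hU, hboxes, ← hS]
  exact ncard_reflectAt_image_signedOrthant fun i => hσ (N i) i
end

section
/- Suppose s, s' : ℕ → {-1,1} and for each choice of sign ε ∈ {-1,1} there exist m ≠ n with s(m+j) = ε·s'(n+j) for all j, where also s(j) = ε'·s'(j) for all j for some sign ε'. Then s is eventually periodic. -/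
/-! A shift identity `s (m + j) = δ * s (n + j)` with `m ≠ n` and `δ * δ = 1` says that, from
`min m n` on, shifting by `k = |m - n|` multiplies `s` by `δ`; shifting twice multiplies by
`δ * δ = 1`, so `s` is eventually `2k`-periodic. -/

section SignShift

variable {α : Type*} [Monoid α] {s : ℕ → α} {δ : α}

lemma exists_shift_eq_mul_of_ne (hδ : δ * δ = 1) {m n : ℕ} (hmn : m ≠ n)
    (h : ∀ j, s (m + j) = δ * s (n + j)) :
    ∃ N k : ℕ, 1 ≤ k ∧ ∀ j ≥ N, s (j + k) = δ * s j := by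
  rcases hmn.lt_or_gt with hlt | hgt
  · refine ⟨m, n - m, by omega, fun j hj => ?_⟩
    have hj' : s j = δ * s (j + (n - m)) := by
      simpa [show m + (j - m) = j by omega, show n + (j - m) = j + (n - m) by omega]
        using h (j - m)
    rw [hj', ← mul_assoc, hδ, one_mul]
  · refine ⟨n, m - n, by omega, fun j hj => ?_⟩
    simpa [show m + (j - n) = j + (m - n) by omega, show n + (j - n) = j by omega]
      using h (j - n)

lemma shift_two_mul_eq_of_shift_eq_mul (hδ : δ * δ = 1) {N k : ℕ}
    (h : ∀ j ≥ N, s (j + k) = δ * s j) : ∀ j ≥ N, s (j + 2 * k) = s j := fun j hj =>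
  calc s (j + 2 * k) = s (j + k + k) := by rw [two_mul, add_assoc]
    _ = δ * (δ * s j) := by rw [h (j + k) (by omega), h j hj]
    _ = s j := by rw [← mul_assoc, hδ, one_mul]

end SignShift

theorem eventually_periodic_of_sign_shift_general (s s' : ℕ → ℤ)
    (hshift : ∃ (ε : ℤ) (m n : ℕ), (ε = -1 ∨ ε = 1) ∧ m ≠ n ∧
      ∀ j, s (m + j) = ε * s' (n + j))
    (hsame : ∃ ε' : ℤ, (ε' = -1 ∨ ε' = 1) ∧ ∀ j, s j = ε' * s' j) :
    ∃ N k : ℕ, 1 ≤ k ∧ ∀ j ≥ N, s (j + k) = s j := by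
  obtain ⟨ε, m, n, hε, hmn, hsh⟩ := hshift
  obtain ⟨ε', hε', hsa⟩ := hsame
  have hunit : IsUnit ε ∧ IsUnit ε' := ⟨Int.isUnit_iff.mpr hε.symm, Int.isUnit_iff.mpr hε'.symm⟩
  have hs' : ∀ j, s' j = ε' * s j := fun j => by
    rw [hsa, ← mul_assoc, Int.isUnit_mul_self hunit.2, one_mul]
  have hδ : (ε * ε') * (ε * ε') = 1 := Int.isUnit_mul_self (hunit.1.mul hunit.2)
  have hself : ∀ j, s (m + j) = (ε * ε') * s (n + j) := fun j => by
    rw [hsh, hs', mul_assoc]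
  obtain ⟨N, k, hk, hper⟩ := exists_shift_eq_mul_of_ne hδ hmn hself
  exact ⟨N, 2 * k, by omega, shift_two_mul_eq_of_shift_eq_mul hδ hper⟩

/-- If a sequence `s` agrees (up to a global sign) with a nontrivial shift of a sequence
`s'`, and agrees with `s'` itself up to a global sign, then `s` is eventually periodic. -/
theorem eventually_periodic_of_sign_shift (s s' : ℕ → ℤ)
    (hs : ∀ j, s j = -1 ∨ s j = 1) (hs' : ∀ j, s' j = -1 ∨ s' j = 1)
    (hshift : ∃ (ε : ℤ) (m n : ℕ), (ε = -1 ∨ ε = 1) ∧ m ≠ n ∧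
      ∀ j, s (m + j) = ε * s' (n + j))
    (hsame : ∃ ε' : ℤ, (ε' = -1 ∨ ε' = 1) ∧ ∀ j, s j = ε' * s' j) :
    ∃ N k : ℕ, 1 ≤ k ∧ ∀ j ≥ N, s (j + k) = s j :=
  eventually_periodic_of_sign_shift_general s s' hshift hsame
end
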